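/- The normalized Carlitz polynomials satisfy the K-binomial identity: e_i(st) = Σ_{n=0}^{i} binom(i,n)_K · e_n(t) · (e_{i-n}(s))^{q^n} for all s, t in F_q[x], where e_i(s) = ∏_{deg m < i, m ∈ F_q[x]} (s - m) for i ≥ 1 and e_0(s) = s. -/

import Mathlib

open Polynomial Finset

/-- The Carlitz bracket `[i] = x^{q^i} - x` in `F_q[x]`. -/
noncomputable def carBr (Fq : Type) [Field Fq] [Fintype Fq] (q i : ℕ) : Polynomial Fq :=
  X ^ q ^ i - X

/-- The Carlitz factorial `D_0 = 1`, `D_i = [i]·D_{i-1}^q`. -/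
noncomputable def carD (Fq : Type) [Field Fq] [Fintype Fq] (q : ℕ) : ℕ → Polynomial Fq
  | 0 => 1
  | i + 1 => carBr Fq q (i + 1) * (carD Fq q i) ^ q

/-- The `K`-binomial coefficient `binom(k,m)_K = D_k/(D_m·D_{k-m}^{q^m})` in `F_q(x)`,
defined for integer `m` and extended by `0` outside the range `0 ≤ m ≤ k`. -/
noncomputable def binomK (Fq : Type) [Field Fq] [Fintype Fq] (q : ℕ) (k : ℕ) (m : ℤ) :
    RatFunc Fq :=
  if 0 ≤ m ∧ m ≤ (k : ℤ) then
    algebraMap (Polynomial Fq) (RatFunc Fq) (carD Fq q k) /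
      (algebraMap (Polynomial Fq) (RatFunc Fq) (carD Fq q m.toNat) *
        algebraMap (Polynomial Fq) (RatFunc Fq) (carD Fq q (k - m.toNat)) ^ q ^ m.toNat)
  else 0

/-- The (non-normalized) Carlitz polynomial `e_i(s) = ∏_{m ∈ F_q[x], deg m < i} (s - m)`,
the product over all `q^i` polynomials of degree `< i` (including `0`); `e_0(s) = s`. -/
noncomputable def carE (Fq : Type) [Field Fq] [Fintype Fq] (i : ℕ) (s : Polynomial Fq) :
    Polynomial Fq :=
  ∏ c : Fin i → Fq, (s - ∑ j : Fin i, Polynomial.C (c j) * X ^ (j : ℕ))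

/-!
Splitting off the top coefficient of `m` gives `e_{i+1}(u) = ∏_{a ∈ F_q} e_i(u - a x^i)`. By
induction this makes every `e_i` `F_q`-linear, and then, since `∏_a (y - a z) = y^q - z^{q-1} y`,
`e_{i+1} = e_i^q - e_i(x^i)^{q-1} e_i`. A joint induction with the twist relation
`e_{i+1}(x u) = x e_{i+1}(u) + [i+1] e_i(u)^q` shows `e_i(x^i) = D_i`, so the normalized
polynomials `E_i = e_i / D_i` satisfy `[i+1] E_{i+1} = E_i^q - E_i`. Inducting on `i` with this
recursion, `E_i(st) = ∑_n E_n(t) E_{i-n}(s)^{q^n}` follows from `[n] + [i-n]^{q^n} = [i]`;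
multiplying by `D_i` gives the `K`-binomial form.
-/

namespace Carlitz

section Frobenius

variable (K : Type*) {R : Type*} [Field K] [Fintype K] [CommRing R] [Algebra K R]

theorem frobeniusAlgHom_pow_apply (n : ℕ) (a : R) :
    (FiniteField.frobeniusAlgHom K R ^ n) a = a ^ Fintype.card K ^ n := by
  rw [AlgHom.coe_pow, FiniteField.coe_frobeniusAlgHom, pow_iterate]

theorem add_pow_card (a b : R) :
    (a + b) ^ Fintype.card K = a ^ Fintype.card K + b ^ Fintype.card K :=
  map_add (FiniteField.frobeniusAlgHom K R) a b

theorem sub_pow_card (a b : R) :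
    (a - b) ^ Fintype.card K = a ^ Fintype.card K - b ^ Fintype.card K :=
  map_sub (FiniteField.frobeniusAlgHom K R) a b

theorem sum_pow_card {ι : Type*} (s : Finset ι) (f : ι → R) :
    (∑ j ∈ s, f j) ^ Fintype.card K = ∑ j ∈ s, f j ^ Fintype.card K :=
  map_sum (FiniteField.frobeniusAlgHom K R) f s

theorem sub_pow_card_pow (n : ℕ) (a b : R) :
    (a - b) ^ Fintype.card K ^ n = a ^ Fintype.card K ^ n - b ^ Fintype.card K ^ n := by
  simpa only [frobeniusAlgHom_pow_apply] using map_sub (FiniteField.frobeniusAlgHom K R ^ n) a b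

end Frobenius

section LinearProduct

variable {Fq : Type*} [Field Fq] [Fintype Fq]

theorem prod_X_sub_C_eq_X_pow_card_sub_X :
    ∏ a : Fq, (X - C a) = (X ^ Fintype.card Fq - X : Fq[X]) := by
  have hmonic : (X ^ Fintype.card Fq - X : Fq[X]).Monic :=
    monic_X_pow_sub (by rw [degree_X]; exact_mod_cast Fintype.one_lt_card)
  have h := prod_multiset_X_sub_C_of_monic_of_roots_card_eq hmonic (by
    rw [FiniteField.roots_X_pow_card_sub_X,
      FiniteField.X_pow_card_sub_X_natDegree_eq _ Fintype.one_lt_card]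
    rfl)
  rwa [FiniteField.roots_X_pow_card_sub_X, Finset.prod_map_val] at h

theorem prod_sub_algebraMap_mul {L : Type*} [Field L] [Algebra Fq L] (y z : L) :
    ∏ a : Fq, (y - algebraMap Fq L a * z) =
      y ^ Fintype.card Fq - z ^ (Fintype.card Fq - 1) * y := by
  rcases eq_or_ne z 0 with rfl | hz
  · simp [zero_pow (Nat.sub_ne_zero_of_lt Fintype.one_lt_card)]
  have hroots : ∏ a : Fq, (y / z - algebraMap Fq L a) = (y / z) ^ Fintype.card Fq - y / z := by
    simpa using congrArg (aeval (y / z)) (prod_X_sub_C_eq_X_pow_card_sub_X (Fq := Fq))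
  obtain ⟨r, hr⟩ : ∃ r, Fintype.card Fq = r + 1 :=
    ⟨_, (Nat.sub_add_cancel Fintype.card_pos).symm⟩
  calc ∏ a : Fq, (y - algebraMap Fq L a * z)
      = ∏ a : Fq, (z * (y / z - algebraMap Fq L a)) := by
        refine prod_congr rfl fun a _ => ?_
        field_simp
    _ = y ^ Fintype.card Fq - z ^ (Fintype.card Fq - 1) * y := by
        rw [prod_mul_distrib, hroots, prod_const, card_univ, div_pow, hr, Nat.add_sub_cancel]
        field_simp
        ring

theorem prod_sub_C_mul (y z : Fq[X]) :
    ∏ a : Fq, (y - C a * z) = y ^ Fintype.card Fq - z ^ (Fintype.card Fq - 1) * y := by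
  apply IsFractionRing.injective Fq[X] (RatFunc Fq)
  simpa [map_prod, IsScalarTower.algebraMap_apply Fq Fq[X] (RatFunc Fq)] using
    prod_sub_algebraMap_mul (Fq := Fq) (algebraMap Fq[X] (RatFunc Fq) y) (algebraMap _ _ z)

end LinearProduct

section CarlitzPolynomial

variable {Fq : Type} [Field Fq] [Fintype Fq]

theorem carE_zero_left (s : Fq[X]) : carE Fq 0 s = s := by
  simp [carE]

theorem carE_zero_right (i : ℕ) : carE Fq i 0 = 0 :=
  prod_eq_zero (mem_univ 0) (by simp)

theorem carE_succ_eq_prod (i : ℕ) (u : Fq[X]) :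
    carE Fq (i + 1) u = ∏ a : Fq, carE Fq i (u - C a * X ^ i) := by
  rw [carE, ← (Fin.snocEquiv fun _ => Fq).prod_comp, Fintype.prod_prod_type]
  refine prod_congr rfl fun a _ => prod_congr rfl fun c _ => ?_
  simp only [Fin.snocEquiv_apply, Fin.sum_univ_castSucc, Fin.snoc_castSucc, Fin.val_castSucc,
    Fin.snoc_last, Fin.val_last]
  ring

theorem carE_succ_X_pow (i : ℕ) : carE Fq (i + 1) (X ^ i) = 0 := by
  rw [carE_succ_eq_prod]
  exact prod_eq_zero (mem_univ 1) (by simp [carE_zero_right])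

theorem carE_succ_of_map_sub {i : ℕ}
    (h : ∀ (a : Fq) (u : Fq[X]),
      carE Fq i (u - C a * X ^ i) = carE Fq i u - C a * carE Fq i (X ^ i))
    (u : Fq[X]) :
    carE Fq (i + 1) u =
      carE Fq i u ^ Fintype.card Fq - carE Fq i (X ^ i) ^ (Fintype.card Fq - 1) * carE Fq i u := by
  simp_rw [carE_succ_eq_prod, h]
  exact prod_sub_C_mul _ _

theorem carE_sub_C_mul (i : ℕ) (a : Fq) (u v : Fq[X]) :
    carE Fq i (u - C a * v) = carE Fq i u - C a * carE Fq i v := by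
  induction i generalizing a u v with
  | zero => simp [carE_zero_left]
  | succ i ih =>
    have hrec := carE_succ_of_map_sub (fun b w => ih b w (X ^ i))
    have hfrob := sub_pow_card Fq (carE Fq i u) (C a * carE Fq i v)
    rw [mul_pow, ← C_pow, FiniteField.pow_card] at hfrob
    rw [hrec, hrec, hrec, ih, hfrob]
    ring

theorem carE_succ (i : ℕ) (u : Fq[X]) :
    carE Fq (i + 1) u =
      carE Fq i u ^ Fintype.card Fq - carE Fq i (X ^ i) ^ (Fintype.card Fq - 1) * carE Fq i u :=
  carE_succ_of_map_sub (fun a w => carE_sub_C_mul i a w (X ^ i)) u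

/- The twist relation at level `i + 1` evaluated at the root `x^i` of `e_{i+1}` gives
`e_{i+1}(x^{i+1}) = [i+1] e_i(x^i)^q`, and the recursion `carE_succ` lifts it to level `i + 2`. -/
theorem carE_X_pow_self_and_carE_succ_X_mul (i : ℕ) :
    carE Fq i (X ^ i) = carD Fq (Fintype.card Fq) i ∧
      ∀ u : Fq[X], carE Fq (i + 1) (X * u) =
        X * carE Fq (i + 1) u +
          carBr Fq (Fintype.card Fq) (i + 1) * carE Fq i u ^ Fintype.card Fq := by
  have hq : Fintype.card Fq ≠ 0 := Fintype.card_ne_zero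
  induction i with
  | zero =>
    refine ⟨by simp [carE_zero_left, carD], fun u => ?_⟩
    simp only [carE_succ, carE_zero_left, carBr, pow_zero, one_pow, one_mul, mul_pow]
    ring
  | succ i ih =>
    obtain ⟨hself, hmul⟩ := ih
    have hself' : carE Fq (i + 1) (X ^ (i + 1)) = carD Fq (Fintype.card Fq) (i + 1) := by
      rw [pow_succ', hmul, carE_succ_X_pow, hself, mul_zero, zero_add]
      rfl
    refine ⟨hself', fun u => ?_⟩
    have hbr : carBr Fq (Fintype.card Fq) (i + 1) ^ Fintype.card Fq =
        X ^ Fintype.card Fq ^ (i + 2) - X ^ Fintype.card Fq := by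
      rw [carBr, sub_pow_card, ← pow_mul, ← pow_succ]
    have hbr' := pow_sub_one_mul hq (carBr Fq (Fintype.card Fq) (i + 1))
    have hfrob := congrArg (· ^ Fintype.card Fq) (carE_succ i u)
    simp only [hself, sub_pow_card, mul_pow] at hfrob
    rw [carE_succ, carE_succ (i + 1) u, hself', hmul, add_pow_card, mul_pow, mul_pow,
      show carD Fq (Fintype.card Fq) (i + 1) =
        carBr Fq (Fintype.card Fq) (i + 1) * carD Fq (Fintype.card Fq) i ^ Fintype.card Fq from rfl,
      show carBr Fq (Fintype.card Fq) (i + 2) = X ^ Fintype.card Fq ^ (i + 2) - X from rfl]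
    linear_combination carE Fq (i + 1) u ^ Fintype.card Fq * hbr -
      carBr Fq (Fintype.card Fq) (i + 1) ^ Fintype.card Fq * hfrob -
      carD Fq (Fintype.card Fq) i ^ (Fintype.card Fq * (Fintype.card Fq - 1)) *
        carE Fq i u ^ Fintype.card Fq * hbr'

theorem carE_X_pow_self (i : ℕ) : carE Fq i (X ^ i) = carD Fq (Fintype.card Fq) i :=
  (carE_X_pow_self_and_carE_succ_X_mul i).1

theorem carBr_zero : carBr Fq (Fintype.card Fq) 0 = 0 := by
  simp [carBr]

theorem carBr_ne_zero {i : ℕ} (hi : i ≠ 0) : carBr Fq (Fintype.card Fq) i ≠ 0 :=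
  FiniteField.X_pow_card_pow_sub_X_ne_zero Fq hi Fintype.one_lt_card

theorem carBr_add_carBr_sub_pow {m k : ℕ} (h : m ≤ k) :
    carBr Fq (Fintype.card Fq) m + carBr Fq (Fintype.card Fq) (k - m) ^ Fintype.card Fq ^ m =
      carBr Fq (Fintype.card Fq) k := by
  rw [carBr, carBr, carBr, sub_pow_card_pow, ← pow_mul, ← pow_add, Nat.sub_add_cancel h]
  ring

theorem carD_ne_zero (i : ℕ) : carD Fq (Fintype.card Fq) i ≠ 0 := by
  induction i with
  | zero => exact one_ne_zero
  | succ i ih => exact mul_ne_zero (carBr_ne_zero i.succ_ne_zero) (pow_ne_zero _ ih)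

theorem binomK_of_le {k n : ℕ} (h : n ≤ k) :
    binomK Fq (Fintype.card Fq) k n =
      algebraMap Fq[X] (RatFunc Fq) (carD Fq (Fintype.card Fq) k) /
        (algebraMap Fq[X] (RatFunc Fq) (carD Fq (Fintype.card Fq) n) *
          algebraMap Fq[X] (RatFunc Fq) (carD Fq (Fintype.card Fq) (k - n)) ^
            Fintype.card Fq ^ n) := by
  simp [binomK, h]

end CarlitzPolynomial

section Normalized

variable {Fq : Type} [Field Fq] [Fintype Fq]

noncomputable def carENorm (i : ℕ) (s : Fq[X]) : RatFunc Fq :=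
  algebraMap Fq[X] (RatFunc Fq) (carE Fq i s) /
    algebraMap Fq[X] (RatFunc Fq) (carD Fq (Fintype.card Fq) i)

theorem carBr_mul_carENorm_succ (i : ℕ) (u : Fq[X]) :
    algebraMap Fq[X] (RatFunc Fq) (carBr Fq (Fintype.card Fq) (i + 1)) * carENorm (i + 1) u =
      carENorm i u ^ Fintype.card Fq - carENorm i u := by
  have hD := RatFunc.algebraMap_ne_zero (carD_ne_zero (Fq := Fq) i)
  have hB := RatFunc.algebraMap_ne_zero (carBr_ne_zero (Fq := Fq) i.succ_ne_zero)
  have hpow := pow_sub_one_mul (Fintype.card_ne_zero (α := Fq))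
    (algebraMap Fq[X] (RatFunc Fq) (carD Fq (Fintype.card Fq) i))
  rw [carENorm, carENorm, carE_succ, carE_X_pow_self]
  simp only [carD, map_mul, map_pow, map_sub, div_pow]
  field_simp
  linear_combination -algebraMap Fq[X] (RatFunc Fq) (carE Fq i u) * hpow

theorem carENorm_frobenius_sub (n m : ℕ) (s t : Fq[X]) :
    (carENorm n t * carENorm m s ^ Fintype.card Fq ^ n) ^ Fintype.card Fq -
        carENorm n t * carENorm m s ^ Fintype.card Fq ^ n =
      algebraMap Fq[X] (RatFunc Fq) (carBr Fq (Fintype.card Fq) (n + 1)) * carENorm (n + 1) t *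
          carENorm m s ^ Fintype.card Fq ^ (n + 1) +
        algebraMap Fq[X] (RatFunc Fq) (carBr Fq (Fintype.card Fq) (m + 1)) ^ Fintype.card Fq ^ n *
          carENorm n t * carENorm (m + 1) s ^ Fintype.card Fq ^ n := by
  have ht := carBr_mul_carENorm_succ n t
  have hs := congrArg (· ^ Fintype.card Fq ^ n) (carBr_mul_carENorm_succ m s)
  simp only [mul_pow, sub_pow_card_pow] at hs
  linear_combination -carENorm m s ^ Fintype.card Fq ^ (n + 1) * ht - carENorm n t * hs

theorem carENorm_mul (i : ℕ) (s t : Fq[X]) :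
    carENorm i (s * t) =
      ∑ n ∈ range (i + 1), carENorm n t * carENorm (i - n) s ^ Fintype.card Fq ^ n := by
  induction i with
  | zero => simp [carENorm, carE_zero_left, carD, mul_comm]
  | succ i ih =>
    refine mul_left_cancel₀
      (RatFunc.algebraMap_ne_zero (carBr_ne_zero (Fq := Fq) i.succ_ne_zero)) ?_
    rw [carBr_mul_carENorm_succ, ih, sum_pow_card, ← sum_sub_distrib, mul_sum]
    calc ∑ n ∈ range (i + 1),
          ((carENorm n t * carENorm (i - n) s ^ Fintype.card Fq ^ n) ^ Fintype.card Fq -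
            carENorm n t * carENorm (i - n) s ^ Fintype.card Fq ^ n)
        = ∑ n ∈ range (i + 1),
            (algebraMap Fq[X] (RatFunc Fq) (carBr Fq (Fintype.card Fq) (n + 1)) *
                (carENorm (n + 1) t * carENorm (i + 1 - (n + 1)) s ^ Fintype.card Fq ^ (n + 1)) +
              algebraMap Fq[X] (RatFunc Fq) (carBr Fq (Fintype.card Fq) (i + 1 - n)) ^
                  Fintype.card Fq ^ n *
                (carENorm n t * carENorm (i + 1 - n) s ^ Fintype.card Fq ^ n)) := by
          refine sum_congr rfl fun n hn => ?_
          have hni : i - n + 1 = i + 1 - n := by have := mem_range.1 hn; omega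
          rw [carENorm_frobenius_sub, hni, Nat.add_sub_add_right]
          ring
      _ = ∑ n ∈ range (i + 2),
            (algebraMap Fq[X] (RatFunc Fq) (carBr Fq (Fintype.card Fq) n) +
                algebraMap Fq[X] (RatFunc Fq) (carBr Fq (Fintype.card Fq) (i + 1 - n)) ^
                  Fintype.card Fq ^ n) *
              (carENorm n t * carENorm (i + 1 - n) s ^ Fintype.card Fq ^ n) := by
          simp_rw [sum_add_distrib, add_mul, sum_add_distrib]
          rw [sum_range_succ' _ (i + 1), sum_range_succ _ (i + 1)]
          simp [carBr_zero]
      _ = _ := by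
          refine sum_congr rfl fun n hn => ?_
          rw [← map_pow, ← map_add,
            carBr_add_carBr_sub_pow (Nat.lt_succ_iff.1 (mem_range.1 hn))]

end Normalized

end Carlitz

theorem carlitz_K_binomial_identity (Fq : Type) [Field Fq] [Fintype Fq]
    (q : ℕ) (hq : q = Fintype.card Fq) (i : ℕ) (s t : Polynomial Fq) :
    algebraMap (Polynomial Fq) (RatFunc Fq) (carE Fq i (s * t)) =
      ∑ n ∈ Finset.range (i + 1),
        binomK Fq q i (n : ℤ) *
          algebraMap (Polynomial Fq) (RatFunc Fq) (carE Fq n t) *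
          algebraMap (Polynomial Fq) (RatFunc Fq) (carE Fq (i - n) s) ^ q ^ n := by
  subst hq
  have hD (k : ℕ) := RatFunc.algebraMap_ne_zero (Carlitz.carD_ne_zero (Fq := Fq) k)
  rw [← div_mul_cancel₀ (algebraMap _ _ (carE Fq i (s * t))) (hD i), ← Carlitz.carENorm,
    Carlitz.carENorm_mul, mul_comm, mul_sum]
  refine sum_congr rfl fun n hn => ?_
  rw [Carlitz.binomK_of_le (Nat.lt_succ_iff.1 (mem_range.1 hn)), Carlitz.carENorm,
    Carlitz.carENorm, div_pow]
  field_simp [hD]
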